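/- If λ_max(β) denotes the largest generalized eigenvalue of K ξ = λ (M + βM_Γ) ξ and Δt_crit(β) = 2/√(λ_max(β)), then β ≥ 0 implies Δt_crit(β) ≥ Δt_crit(0), i.e. adding the positive semidefinite mass-scaling term never decreases the critical time step. -/

import Mathlib

/-! For `β ≥ 0` the form `M + β M_Γ` dominates `M`, so every Rayleigh quotient of `K` with respect
to `M + β M_Γ` is at most the one with respect to `M`; hence `λ_max(β) ≤ λ_max(0)`. Since `K ≠ 0` is
positive semidefinite, `λ_max(β) > 0`, and `x ↦ 2 / √x` is antitone on the positive reals. -/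

open Matrix

/-- The set of generalized Rayleigh quotients ξᵀAξ/(ξᵀBξ) over nonzero ξ. -/
def rayleighSet {n : ℕ} (A B : Matrix (Fin n) (Fin n) ℝ) : Set ℝ :=
  {r : ℝ | ∃ ξ : Fin n → ℝ, ξ ≠ 0 ∧ r = (ξ ⬝ᵥ A.mulVec ξ) / (ξ ⬝ᵥ B.mulVec ξ)}

lemma Matrix.PosSemidef.exists_dotProduct_mulVec_pos {ι : Type*} [Fintype ι]
    {A : Matrix ι ι ℝ} (hA : A.PosSemidef) (hA0 : A ≠ 0) :
    ∃ ξ : ι → ℝ, 0 < ξ ⬝ᵥ A *ᵥ ξ := by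
  by_contra! h
  refine hA0 (ext_iff_mulVec.2 fun ξ => ?_)
  have hzero : star ξ ⬝ᵥ A *ᵥ ξ = 0 :=
    le_antisymm (h ξ) (by simpa using hA.dotProduct_mulVec_nonneg ξ)
  simpa using (hA.dotProduct_mulVec_zero_iff ξ).1 hzero

section RayleighQuotient

variable {ι : Type*} [Fintype ι]

noncomputable def rayleighQuotient (A B : Matrix ι ι ℝ) (ξ : ι → ℝ) : ℝ :=
  (ξ ⬝ᵥ A *ᵥ ξ) / (ξ ⬝ᵥ B *ᵥ ξ)

lemma rayleighQuotient_smul (A B : Matrix ι ι ℝ) {c : ℝ} (hc : c ≠ 0) (ξ : ι → ℝ) :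
    rayleighQuotient A B (c • ξ) = rayleighQuotient A B ξ := by
  simp only [rayleighQuotient, mulVec_smul, smul_dotProduct, dotProduct_smul, smul_eq_mul]
  rw [mul_div_mul_left _ _ hc, mul_div_mul_left _ _ hc]

lemma continuousOn_rayleighQuotient (A : Matrix ι ι ℝ) {B : Matrix ι ι ℝ} (hB : B.PosDef) :
    ContinuousOn (rayleighQuotient A B) {0}ᶜ := by
  have hquad : ∀ C : Matrix ι ι ℝ, Continuous fun ξ : ι → ℝ => ξ ⬝ᵥ C *ᵥ ξ := fun C =>
    continuous_id.dotProduct (continuous_const.matrix_mulVec continuous_id)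
  refine (hquad A).continuousOn.div (hquad B).continuousOn fun ξ hξ => ?_
  simpa using (hB.dotProduct_mulVec_pos hξ).ne'

lemma rayleighQuotient_nonneg {A B : Matrix ι ι ℝ} (hA : A.PosSemidef) (hB : B.PosSemidef)
    (ξ : ι → ℝ) : 0 ≤ rayleighQuotient A B ξ :=
  div_nonneg (by simpa using hA.dotProduct_mulVec_nonneg ξ)
    (by simpa using hB.dotProduct_mulVec_nonneg ξ)

lemma rayleighQuotient_add_le {A B C : Matrix ι ι ℝ} (hA : A.PosSemidef) (hB : B.PosDef)
    (hC : C.PosSemidef) {ξ : ι → ℝ} (hξ : ξ ≠ 0) :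
    rayleighQuotient A (B + C) ξ ≤ rayleighQuotient A B ξ := by
  have hden : ξ ⬝ᵥ B *ᵥ ξ ≤ ξ ⬝ᵥ (B + C) *ᵥ ξ := by
    rw [add_mulVec, dotProduct_add]
    exact le_add_of_nonneg_right (by simpa using hC.dotProduct_mulVec_nonneg ξ)
  exact div_le_div_of_nonneg_left (by simpa using hA.dotProduct_mulVec_nonneg ξ)
    (by simpa using hB.dotProduct_mulVec_pos hξ) hden

end RayleighQuotient

section RayleighSet

variable {n : ℕ}

lemma rayleighSet_eq_image (A B : Matrix (Fin n) (Fin n) ℝ) :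
    rayleighSet A B = rayleighQuotient A B '' {0}ᶜ := by
  ext r
  simp [rayleighSet, rayleighQuotient, eq_comm]

/-- Scale invariance reduces the quotient to a continuous function on the compact unit sphere. -/
lemma bddAbove_rayleighSet (A : Matrix (Fin n) (Fin n) ℝ) {B : Matrix (Fin n) (Fin n) ℝ}
    (hB : B.PosDef) : BddAbove (rayleighSet A B) := by
  have hsphere : Metric.sphere (0 : Fin n → ℝ) 1 ⊆ {0}ᶜ := fun ξ hξ h0 => by
    simp [Set.mem_singleton_iff.1 h0] at hξ
  refine ((isCompact_sphere 0 1).bddAbove_image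
    ((continuousOn_rayleighQuotient A hB).mono hsphere)).mono ?_
  rw [rayleighSet_eq_image]
  rintro _ ⟨ξ, hξ, rfl⟩
  have hnorm : ‖ξ‖ ≠ 0 := norm_ne_zero_iff.2 hξ
  refine ⟨‖ξ‖⁻¹ • ξ, ?_, rayleighQuotient_smul A B (inv_ne_zero hnorm) ξ⟩
  simp [norm_smul, hnorm]

lemma sSup_rayleighSet_add_le {A B C : Matrix (Fin n) (Fin n) ℝ} (hA : A.PosSemidef)
    (hB : B.PosDef) (hC : C.PosSemidef) :
    sSup (rayleighSet A (B + C)) ≤ sSup (rayleighSet A B) := by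
  rw [rayleighSet_eq_image, rayleighSet_eq_image]
  refine Real.sSup_le (Set.forall_mem_image.2 fun ξ hξ => ?_)
    (Real.sSup_nonneg (Set.forall_mem_image.2 fun ξ _ =>
      rayleighQuotient_nonneg hA hB.posSemidef ξ))
  refine (rayleighQuotient_add_le hA hB hC hξ).trans (le_csSup ?_ (Set.mem_image_of_mem _ hξ))
  simpa [rayleighSet_eq_image] using bddAbove_rayleighSet A hB

lemma sSup_rayleighSet_pos {A B : Matrix (Fin n) (Fin n) ℝ} (hA : A.PosSemidef) (hA0 : A ≠ 0)
    (hB : B.PosDef) : 0 < sSup (rayleighSet A B) := by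
  obtain ⟨ξ, hξ⟩ := hA.exists_dotProduct_mulVec_pos hA0
  have hξ0 : ξ ≠ 0 := by
    rintro rfl
    simp at hξ
  have hpos : 0 < rayleighQuotient A B ξ :=
    div_pos hξ (by simpa using hB.dotProduct_mulVec_pos hξ0)
  refine hpos.trans_le (le_csSup (bddAbove_rayleighSet A hB) ?_)
  rw [rayleighSet_eq_image]
  exact Set.mem_image_of_mem _ hξ0

end RayleighSet

/-- with λ_max(β) the largest generalized eigenvalue of
Kξ = λ(M+βM_Γ)ξ and Δt_crit(β) = 2/√(λ_max(β)), β ≥ 0 implies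
Δt_crit(β) ≥ Δt_crit(0). -/
theorem stmt_14 {n : ℕ} (M MΓ K : Matrix (Fin n) (Fin n) ℝ)
    (hM : M.PosDef) (hMΓ : MΓ.PosSemidef) (hK : K.PosSemidef) (hK0 : K ≠ 0)
    (lamMax : ℝ → ℝ)
    (hlam : ∀ β, lamMax β = sSup (rayleighSet K (M + β • MΓ)))
    (dtCrit : ℝ → ℝ) (hdt : ∀ β, dtCrit β = 2 / Real.sqrt (lamMax β))
    (β : ℝ) (hβ : 0 ≤ β) :
    dtCrit 0 ≤ dtCrit β := by
  have hβMΓ : (β • MΓ).PosSemidef := hMΓ.smul hβ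
  have hle : lamMax β ≤ lamMax 0 := by
    rw [hlam, hlam, zero_smul, add_zero]
    exact sSup_rayleighSet_add_le hK hM hβMΓ
  have hpos : 0 < lamMax β := by
    rw [hlam]
    exact sSup_rayleighSet_pos hK hK0 (hM.add_posSemidef hβMΓ)
  rw [hdt, hdt]
  exact div_le_div_of_nonneg_left zero_le_two (Real.sqrt_pos.2 hpos) (Real.sqrt_le_sqrt hle)
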